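/- With V_{m,l} the isometry above, for every A ∈ B(H_m) one has V_{m,l}*(A ⊗ 1_{H_{l−m}}) V_{m,l} = Σ_{|r|=l−m} R_r A R_r* |_{H_l} = ι_{m,l}(A). In other words the coherent system ι_{m,l}(A) = p_l(A ⊗ 1)p_l is implemented by the isometries V_{m,l}. -/

import Mathlib

open scoped Matrix

noncomputable section

/-- Words of length `m` in the alphabet `{1,…,n}`. -/
abbrev Wd (n m : ℕ) := Fin m → Fin n

/-- The `m`-th full tensor power `H^{⊗m}` of `H = ℂ^n`, realized as the Euclidean
space with orthonormal basis indexed by words of length `m`. -/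
abbrev TP (n m : ℕ) : Type := EuclideanSpace ℂ (Wd n m)

variable {n : ℕ}

/-- Continuous linear map associated to a (possibly rectangular) matrix. -/
def ofMatR {ι κ : Type} [Fintype ι] [Fintype κ] [DecidableEq ι] [DecidableEq κ]
    (M : Matrix ι κ ℂ) : EuclideanSpace ℂ κ →L[ℂ] EuclideanSpace ℂ ι :=
  LinearMap.toContinuousLinearMap (Matrix.toEuclideanLin M)

/-- Matrix entry of an operator in the standard basis. -/
def ent {a : ℕ} (A : TP n a →L[ℂ] TP n a) (w v : Wd n a) : ℂ :=
  A (EuclideanSpace.single v 1) w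

def wfst {m k : ℕ} (w : Wd n (m + k)) : Wd n m := fun i => w (Fin.castAdd k i)
def wsnd {m k : ℕ} (w : Wd n (m + k)) : Wd n k := fun i => w (Fin.natAdd m i)

/-- Tensor product of vectors, under the identification `H^{⊗m} ⊗ H^{⊗k} = H^{⊗(m+k)}`. -/
def tmul {m k : ℕ} (x : TP n m) (y : TP n k) : TP n (m + k) :=
  (WithLp.equiv 2 _).symm (fun w => x (wfst w) * y (wsnd w))

/-- Tensor product of subspaces `K ⊗ L ⊆ H^{⊗(m+k)}`. -/
def tensorSub {m k : ℕ} (K : Submodule ℂ (TP n m)) (L : Submodule ℂ (TP n k)) :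
    Submodule ℂ (TP n (m + k)) :=
  Submodule.span ℂ {z | ∃ x ∈ K, ∃ y ∈ L, z = tmul x y}

/-- Tensor product of operators, under `H^{⊗m} ⊗ H^{⊗k} = H^{⊗(m+k)}`. -/
def opT {m k : ℕ} (A : TP n m →L[ℂ] TP n m) (B : TP n k →L[ℂ] TP n k) :
    TP n (m + k) →L[ℂ] TP n (m + k) :=
  ofMatR (Matrix.of fun w v => ent A (wfst w) (wfst v) * ent B (wsnd w) (wsnd v))

/-- A subproduct system: `H_0 = ℂ` and `H_{m+k} ⊆ H_m ⊗ H_k`. -/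
def IsSubproduct (H : ∀ m, Submodule ℂ (TP n m)) : Prop :=
  H 0 = ⊤ ∧ ∀ m k, H (m + k) ≤ tensorSub (H m) (H k)

/-- The orthogonal projection `p_m : H^{⊗m} → H_m` (as an operator on `H^{⊗m}`). -/
def prj (H : ∀ m, Submodule ℂ (TP n m)) (m : ℕ) : TP n m →L[ℂ] TP n m :=
  (H m).subtypeL ∘L (H m).orthogonalProjectionOnto

/-- Left creation operator `x ↦ e_j ⊗ x`. -/
def lcreate (j : Fin n) (m : ℕ) : TP n m →L[ℂ] TP n (m + 1) :=
  ofMatR (Matrix.of fun (w : Wd n (m + 1)) (v : Wd n m) =>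
    if w 0 = j ∧ (fun i : Fin m => w i.succ) = v then 1 else 0)

/-- Right creation operator `x ↦ x ⊗ e_j`. -/
def rcreate (j : Fin n) (m : ℕ) : TP n m →L[ℂ] TP n (m + 1) :=
  ofMatR (Matrix.of fun (w : Wd n (m + 1)) (v : Wd n m) =>
    if w (Fin.last m) = j ∧ (fun i : Fin m => w i.castSucc) = v then 1 else 0)

/-- Graded component of the left shift `S_j : H_m → H_{m+1}`, `φ ↦ p_{m+1}(e_j ⊗ φ)`. -/
def lsh (H : ∀ m, Submodule ℂ (TP n m)) (j : Fin n) (m : ℕ) : TP n m →L[ℂ] TP n (m + 1) :=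
  prj H (m + 1) ∘L lcreate j m ∘L prj H m

/-- Graded component of the right shift `R_j : H_m → H_{m+1}`, `φ ↦ p_{m+1}(φ ⊗ e_j)`. -/
def rsh (H : ∀ m, Submodule ℂ (TP n m)) (j : Fin n) (m : ℕ) : TP n m →L[ℂ] TP n (m + 1) :=
  prj H (m + 1) ∘L rcreate j m ∘L prj H m

/-- Iterated left shift `S_r = S_{r_1} ⋯ S_{r_d}` as a map `H_m → H_{m+d}`. -/
def lshW (H : ∀ m, Submodule ℂ (TP n m)) (m : ℕ) :
    ∀ d, Wd n d → (TP n m →L[ℂ] TP n (m + d))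
  | 0, _ => ContinuousLinearMap.id ℂ _
  | d + 1, r => lsh H (r 0) (m + d) ∘L lshW H m d (Fin.tail r)

/-- Iterated right shift `R_r = R_{r_1} ⋯ R_{r_d}` as a map `H_m → H_{m+d}`. -/
def rshW (H : ∀ m, Submodule ℂ (TP n m)) (m : ℕ) :
    ∀ d, Wd n d → (TP n m →L[ℂ] TP n (m + d))
  | 0, _ => ContinuousLinearMap.id ℂ _
  | d + 1, r => rsh H (r (Fin.last d)) (m + d) ∘L rshW H m d (Fin.init r)

/-- Canonical unitary identification `H^{⊗a} = H^{⊗b}` for `a = b`. -/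
def castTP {a b : ℕ} (h : a = b) : TP n a →L[ℂ] TP n b :=
  ofMatR (Matrix.of fun (w : Wd n b) (v : Wd n a) =>
    if (fun i => w (Fin.cast h i)) = v then 1 else 0)

/-- `S_s : H_m → H_l` for a word `s` of length `l - m`. -/
def lshWTo (H : ∀ m, Submodule ℂ (TP n m)) (m l : ℕ) (h : m ≤ l) (s : Wd n (l - m)) :
    TP n m →L[ℂ] TP n l :=
  castTP (by omega : m + (l - m) = l) ∘L lshW H m (l - m) s

/-- `R_r : H_m → H_l` for a word `r` of length `l - m`. -/
def rshWTo (H : ∀ m, Submodule ℂ (TP n m)) (m l : ℕ) (h : m ≤ l) (r : Wd n (l - m)) :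
    TP n m →L[ℂ] TP n l :=
  castTP (by omega : m + (l - m) = l) ∘L rshW H m (l - m) r

/-- Extension of an operator on `H_m` by zero to `H^{⊗m}`. -/
def extOp (H : ∀ m, Submodule ℂ (TP n m)) {m : ℕ} (A : ↥(H m) →L[ℂ] ↥(H m)) :
    TP n m →L[ℂ] TP n m :=
  (H m).subtypeL ∘L A ∘L (H m).orthogonalProjectionOnto

/-- Compression of an operator on `H^{⊗m}` to `H_m`. -/
def cmpOp (H : ∀ m, Submodule ℂ (TP n m)) {m : ℕ} (T : TP n m →L[ℂ] TP n m) :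
    ↥(H m) →L[ℂ] ↥(H m) :=
  (H m).orthogonalProjectionOnto ∘L T ∘L (H m).subtypeL

def tk {m l : ℕ} (h : m ≤ l) (w : Wd n l) : Wd n m := fun i => w (Fin.castLE h i)
def dr (m : ℕ) {l : ℕ} (w : Wd n l) : Wd n (l - m) :=
  fun i => w ⟨m + i.1, by have := i.isLt; omega⟩

/-- `A ⊗ B` on `H^{⊗l} = H^{⊗m} ⊗ H^{⊗(l-m)}`. -/
def opTG {m l : ℕ} (h : m ≤ l) (A : TP n m →L[ℂ] TP n m)
    (B : TP n (l - m) →L[ℂ] TP n (l - m)) : TP n l →L[ℂ] TP n l :=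
  ofMatR (Matrix.of fun w v => ent A (tk h w) (tk h v) * ent B (dr m w) (dr m v))

/-- The inductive-system map `ι_{m,l}(A) = p_l (A ⊗ 1) p_l : B(H_m) → B(H_l)`. -/
def iota (H : ∀ m, Submodule ℂ (TP n m)) {m l : ℕ} (h : m ≤ l)
    (A : ↥(H m) →L[ℂ] ↥(H m)) : ↥(H l) →L[ℂ] ↥(H l) :=
  cmpOp H (opTG h (extOp H A) (ContinuousLinearMap.id ℂ (TP n (l - m))))

/-- The chirality-flipped inductive map `ῑ_{m,l}(A) = Σ_{|s|=l-m} S_s A S_s^* |_{H_l}`. -/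
def iotabar (H : ∀ m, Submodule ℂ (TP n m)) {m l : ℕ} (h : m ≤ l)
    (A : ↥(H m) →L[ℂ] ↥(H m)) : ↥(H l) →L[ℂ] ↥(H l) :=
  cmpOp H (∑ s : Wd n (l - m),
    lshWTo H m l h s ∘L extOp H A ∘L ContinuousLinearMap.adjoint (lshWTo H m l h s))

/-- The word `j` of length one. -/
def letter (j : Fin n) : Wd n 1 := fun _ => j

/-- `Q^{⊗m}` on `H^{⊗m}`. -/
def tpow (Q : TP n 1 →L[ℂ] TP n 1) (m : ℕ) : TP n m →L[ℂ] TP n m :=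
  ofMatR (Matrix.of fun w v => ∏ i : Fin m, ent Q (letter (w i)) (letter (v i)))

/-- Diagonal entry `(Q^{⊗d})_{r,r}`. -/
def Qdg (Q : TP n 1 →L[ℂ] TP n 1) {d : ℕ} (r : Wd n d) : ℂ :=
  ∏ i, ent Q (letter (r i)) (letter (r i))

/-- Trace of an operator. -/
def trOp {E : Type*} [NormedAddCommGroup E] [Module ℂ E] (A : E →L[ℂ] E) : ℂ :=
  LinearMap.trace ℂ E A.toLinearMap

/-- `Tr(Q_m)` where `Q_m = p_m Q^{⊗m} p_m ∈ B(H_m)`. -/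
def trQ (H : ∀ m, Submodule ℂ (TP n m)) (Q : TP n 1 →L[ℂ] TP n 1) (m : ℕ) : ℂ :=
  trOp (cmpOp H (tpow Q m))

/-- The state `φ_m(A) = Tr(ρ^{(m)} A)`, `ρ^{(m)} = Q_m / Tr(Q_m)`. -/
def phiSt (H : ∀ m, Submodule ℂ (TP n m)) (Q : TP n 1 →L[ℂ] TP n 1) (m : ℕ)
    (A : ↥(H m) →L[ℂ] ↥(H m)) : ℂ :=
  trOp (cmpOp H (tpow Q m) ∘L A) / trQ H Q m

/-- The projective-system map
`j_{l,m}(A) = (Tr Q_m / Tr Q_l) Σ_{|r|=l-m} (Q^{⊗(l-m)})_{r,r} R_r^* A R_r |_{H_m}`. -/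
def jmap (H : ∀ m, Submodule ℂ (TP n m)) (Q : TP n 1 →L[ℂ] TP n 1) {m l : ℕ} (h : m ≤ l)
    (A : ↥(H l) →L[ℂ] ↥(H l)) : ↥(H m) →L[ℂ] ↥(H m) :=
  (trQ H Q m / trQ H Q l) • cmpOp H (∑ r : Wd n (l - m),
    Qdg Q r • (ContinuousLinearMap.adjoint (rshWTo H m l h r) ∘L extOp H A ∘L rshWTo H m l h r))

/-- `ρ^{(m)} = Q_m / Tr(Q_m)`, extended by zero to `H^{⊗m}`. -/
def rhoExt (H : ∀ m, Submodule ℂ (TP n m)) (Q : TP n 1 →L[ℂ] TP n 1) (m : ℕ) :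
    TP n m →L[ℂ] TP n m :=
  (trQ H Q m)⁻¹ • (prj H m ∘L tpow Q m ∘L prj H m)

/-- The normalization constant `√(Tr(Q_m)Tr(Q_k)/Tr(Q_{m+k}))`. -/
def lamC (H : ∀ m, Submodule ℂ (TP n m)) (Q : TP n 1 →L[ℂ] TP n 1) (m k : ℕ) : ℂ :=
  (trQ H Q m * trQ H Q k / trQ H Q (m + k)) ^ ((1 : ℂ) / 2)

/-- Right tensoring `x ↦ x ⊗ y` as a continuous linear map. -/
def tensR {m k : ℕ} (y : TP n k) : TP n m →L[ℂ] TP n (m + k) :=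
  ofMatR (Matrix.of fun w v => if wfst w = v then y (wsnd w) else 0)

/-- The map `V_{m,l} ψ = √(TrQ_m TrQ_{l-m}/TrQ_l) Σ_{|r|=l-m} p_l (R_r^* ψ ⊗ e_r)`,
realized as an operator on `H^{⊗(m+k)}` (with `l = m + k`). -/
def Vml (H : ∀ m, Submodule ℂ (TP n m)) (Q : TP n 1 →L[ℂ] TP n 1) (m k : ℕ) :
    TP n (m + k) →L[ℂ] TP n (m + k) :=
  lamC H Q m k • ∑ r : Wd n k,
    prj H (m + k) ∘L tensR (EuclideanSpace.single r 1) ∘L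
      ContinuousLinearMap.adjoint (rshW H m k r)

/-- The claimed adjoint `V_{m,l}^* = √(⋯) (ρ^{(l)})^{-1}(ρ^{(m)} ⊗ ρ^{(l-m)})`. -/
def VmlStar (H : ∀ m, Submodule ℂ (TP n m)) (Q : TP n 1 →L[ℂ] TP n 1) (m k : ℕ) :
    TP n (m + k) →L[ℂ] TP n (m + k) :=
  lamC H Q m k •
    (extOp H (trQ H Q (m + k) • Ring.inverse (cmpOp H (tpow Q (m + k)))) ∘L
      opT (rhoExt H Q m) (rhoExt H Q k))

/-- The adjoint, with instances supplied explicitly. -/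
def adjC {E F : Type*} [NormedAddCommGroup E] [NormedAddCommGroup F]
    [InnerProductSpace ℂ E] [InnerProductSpace ℂ F] [CompleteSpace E] [CompleteSpace F]
    (T : E →L[ℂ] F) : F →L[ℂ] E :=
  @ContinuousLinearMap.adjoint ℂ E F _ _ _ _ _ _ _ T

/-- Complete positivity of a map between operator algebras on Hilbert spaces:
positive matrices over the domain are sent to positive matrices over the codomain.
(Here `Nᴴ` is written as the transpose of the entrywise adjoint.) -/
def IsCP {E F' : Type*} [NormedAddCommGroup E] [InnerProductSpace ℂ E] [CompleteSpace E]
    [NormedAddCommGroup F'] [InnerProductSpace ℂ F'] [CompleteSpace F']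
    (Φ : (E →L[ℂ] E) → (F' →L[ℂ] F')) : Prop :=
  ∀ (d : ℕ) (M : Matrix (Fin d) (Fin d) (E →L[ℂ] E)),
    (∃ N : Matrix (Fin d) (Fin d) (E →L[ℂ] E), M = (N.map fun T => adjC T)ᵀ * N) →
    ∃ N' : Matrix (Fin d) (Fin d) (F' →L[ℂ] F'), M.map Φ = (N'.map fun T => adjC T)ᵀ * N'

/-- The vacuum vector `Ω ∈ H^{⊗0} = ℂ`. -/
def vac (n : ℕ) : TP n 0 := EuclideanSpace.single default 1

/-- The symmetric subspace `H^{∨m} ⊆ H^{⊗m}`. -/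
def symSub (n m : ℕ) : Submodule ℂ (TP n m) where
  carrier := {x | ∀ (σ : Equiv.Perm (Fin m)) (w : Wd n m), x (w ∘ σ) = x w}
  add_mem' := by
    intro a b ha hb σ w
    show (a + b) (w ∘ σ) = (a + b) w
    simp only [PiLp.add_apply, ha σ w, hb σ w]
  zero_mem' := by
    intro σ w
    show (0 : TP n m) (w ∘ σ) = (0 : TP n m) w
    simp
  smul_mem' := by
    intro c x hx σ w
    show (c • x) (w ∘ σ) = (c • x) w
    simp only [PiLp.smul_apply, hx σ w]

/-- Rank-one operator `|x⟩⟨x|`. -/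
def rankOne {F : Type*} [NormedAddCommGroup F] [InnerProductSpace ℂ F] (x : F) :
    F →L[ℂ] F :=
  (innerSL ℂ x).smulRight x

end

/-!
Because `H_{m+k} ⊆ H_m ⊗ H_k`, the projection `p_{m+k}` absorbs `p_m ⊗ 1` and `1 ⊗ p_k`; by
induction on the word this gives `p_{m+k} R_r = p_{m+k} (· ⊗ e_r) p_m`. As
`Σ_r (· ⊗ e_r) B (· ⊗ e_r)^* = B ⊗ 1`, the compression of `Σ_r R_r A R_r^*` to `H_{m+k}` is that
of `A ⊗ 1`, and in the same way `V_{m,l}` acts on `H_{m+k}` as the scalar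
`λ = √(Tr Q_m Tr Q_k / Tr Q_{m+k})`.

On the range of `A ⊗ p_k` the factor `ρ^{(m)} ⊗ ρ^{(k)}` of `V^*` acts as
`Q^{⊗(m+k)} / (Tr Q_m Tr Q_k)`; since `Q^{⊗(m+k)}` commutes with `p_{m+k}`, the factor
`(ρ^{(m+k)})^{-1}` undoes it after compression. The scalar left over is
`λ² Tr Q_{m+k} / (Tr Q_m Tr Q_k) = 1`: the traces are nonzero because a diagonal, positive,
invertible `Q` makes every `Q^{⊗a}` positive definite.
-/

open ContinuousLinearMap
open scoped ComplexOrder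

section Entries

variable {ι κ τ : Type}

-- `ent` is the square case of `entry`, definitionally.
noncomputable def entry [Fintype ι] [Fintype κ] [DecidableEq κ]
    (A : EuclideanSpace ℂ κ →L[ℂ] EuclideanSpace ℂ ι) (w : ι) (v : κ) : ℂ :=
  A (EuclideanSpace.single v 1) w

variable [Fintype ι] [Fintype κ] [DecidableEq κ]

lemma apply_eq_sum_entry (A : EuclideanSpace ℂ κ →L[ℂ] EuclideanSpace ℂ ι)
    (x : EuclideanSpace ℂ κ) (w : ι) : A x w = ∑ v, entry A w v * x v := by
  conv_lhs => rw [← (EuclideanSpace.basisFun κ ℂ).sum_repr x]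
  simp [entry, mul_comm]

lemma ext_entry {A B : EuclideanSpace ℂ κ →L[ℂ] EuclideanSpace ℂ ι}
    (h : ∀ w v, entry A w v = entry B w v) : A = B := by
  ext x w
  simp only [apply_eq_sum_entry, h]

lemma entry_ofMatR [DecidableEq ι] (M : Matrix ι κ ℂ) (w : ι) (v : κ) :
    entry (ofMatR M) w v = M w v := by
  simp [entry, ofMatR, Matrix.toLpLin_apply]

lemma entry_comp [Fintype τ] [DecidableEq τ] (A : EuclideanSpace ℂ κ →L[ℂ] EuclideanSpace ℂ ι)
    (B : EuclideanSpace ℂ τ →L[ℂ] EuclideanSpace ℂ κ) (w : ι) (v : τ) :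
    entry (A ∘L B) w v = ∑ u, entry A w u * entry B u v :=
  apply_eq_sum_entry A _ w

lemma entry_adjoint [DecidableEq ι] (A : EuclideanSpace ℂ κ →L[ℂ] EuclideanSpace ℂ ι)
    (w : κ) (v : ι) : entry (adjoint A) w v = starRingEnd ℂ (entry A v w) := by
  have h := adjoint_inner_right A (EuclideanSpace.single w 1) (EuclideanSpace.single v 1)
  simpa [entry, EuclideanSpace.inner_single_left, EuclideanSpace.inner_single_right] using h

lemma entry_smul (c : ℂ) (A : EuclideanSpace ℂ κ →L[ℂ] EuclideanSpace ℂ ι) (w : ι) (v : κ) :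
    entry (c • A) w v = c * entry A w v := rfl

lemma entry_sum {α : Type} (s : Finset α)
    (f : α → EuclideanSpace ℂ κ →L[ℂ] EuclideanSpace ℂ ι) (w : ι) (v : κ) :
    entry (∑ i ∈ s, f i) w v = ∑ i ∈ s, entry (f i) w v := by
  simp [entry]

lemma entry_id (w v : κ) :
    entry (ContinuousLinearMap.id ℂ (EuclideanSpace ℂ κ)) w v = if w = v then 1 else 0 := by
  simp [entry, PiLp.single_apply]

lemma inner_self_pos_of_apply_eq_mul
    {T : EuclideanSpace ℂ ι →L[ℂ] EuclideanSpace ℂ ι} {d : ι → ℂ} (hd : ∀ i, 0 < d i)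
    (hT : ∀ x i, T x i = d i * x i) {x : EuclideanSpace ℂ ι} (hx : x ≠ 0) :
    0 < inner ℂ x (T x) := by
  have hterm (i : ι) : inner ℂ (x i) (T x i) = d i * (Complex.normSq (x i) : ℂ) := by
    rw [hT, RCLike.inner_apply, Complex.normSq_eq_conj_mul_self]
    ring
  obtain ⟨i, hi⟩ : ∃ i, x i ≠ 0 := by
    by_contra! h
    exact hx (by ext i; simp [h i])
  rw [PiLp.inner_apply]
  simp only [hterm]
  refine Finset.sum_pos' (fun j _ => mul_nonneg (hd j).le ?_) ⟨i, Finset.mem_univ i, ?_⟩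
  · exact_mod_cast Complex.normSq_nonneg _
  · exact mul_pos (hd i) (by exact_mod_cast Complex.normSq_pos.2 hi)

end Entries

section Compression

variable {E : Type*} [NormedAddCommGroup E] [InnerProductSpace ℂ E]
  {K : Submodule ℂ E} [FiniteDimensional ℂ K] {T : E →L[ℂ] E}

lemma inner_compression (x y : K) :
    inner ℂ x ((K.orthogonalProjectionOnto ∘L T ∘L K.subtypeL) y) = inner ℂ (x : E) (T y) :=
  Submodule.inner_orthogonalProjectionOnto_eq_of_mem_left _ _

lemma trace_compression_pos (hT : ∀ x ≠ 0, 0 < inner ℂ x (T x)) (hK : K ≠ ⊥) :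
    0 < LinearMap.trace ℂ K (K.orthogonalProjectionOnto ∘L T ∘L K.subtypeL).toLinearMap := by
  let b := stdOrthonormalBasis ℂ K
  have : Nonempty (Fin (Module.finrank ℂ K)) :=
    ⟨⟨0, Nat.pos_of_ne_zero (mt Submodule.finrank_eq_zero.1 hK)⟩⟩
  rw [LinearMap.trace_eq_sum_inner _ b]
  refine Finset.sum_pos (fun i _ => ?_) Finset.univ_nonempty
  rw [ContinuousLinearMap.coe_coe, inner_compression]
  exact hT _ (by simpa using b.orthonormal.ne_zero i)

lemma isUnit_compression (hT : ∀ x ≠ 0, 0 < inner ℂ x (T x)) :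
    IsUnit (K.orthogonalProjectionOnto ∘L T ∘L K.subtypeL) := by
  rw [ContinuousLinearMap.isUnit_iff_isUnit_toLinearMap, LinearMap.isUnit_iff_ker_eq_bot,
    LinearMap.ker_eq_bot']
  intro x hx
  by_contra hx0
  have h := hT x (by simpa using hx0)
  rw [← inner_compression, ← ContinuousLinearMap.coe_coe, hx, inner_zero_right] at h
  exact lt_irrefl _ h

end Compression

section TensorProducts

variable {n m k : ℕ}

lemma sum_words_add (f : Wd n (m + k) → ℂ) :
    ∑ w, f w = ∑ a : Wd n m, ∑ b : Wd n k, f (Fin.append a b) := by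
  rw [← (Fin.appendEquiv m k).sum_comp, Fintype.sum_prod_type]
  rfl

@[simp] lemma wfst_append (a : Wd n m) (b : Wd n k) : wfst (Fin.append a b) = a := by
  funext i; simp [wfst]

@[simp] lemma wsnd_append (a : Wd n m) (b : Wd n k) : wsnd (Fin.append a b) = b := by
  funext i; simp [wsnd]

lemma entry_opT (A : TP n m →L[ℂ] TP n m) (B : TP n k →L[ℂ] TP n k) (w v : Wd n (m + k)) :
    entry (opT A B) w v = entry A (wfst w) (wfst v) * entry B (wsnd w) (wsnd v) :=
  entry_ofMatR _ w v

lemma opT_comp (A A' : TP n m →L[ℂ] TP n m) (B B' : TP n k →L[ℂ] TP n k) :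
    opT A B ∘L opT A' B' = opT (A ∘L A') (B ∘L B') := by
  refine ext_entry fun w v => ?_
  rw [entry_comp, entry_opT, entry_comp, entry_comp, sum_words_add, Finset.sum_mul_sum]
  simp only [entry_opT, wfst_append, wsnd_append]
  exact Finset.sum_congr rfl fun _ _ => Finset.sum_congr rfl fun _ _ => by ring

lemma opT_adjoint (A : TP n m →L[ℂ] TP n m) (B : TP n k →L[ℂ] TP n k) :
    adjoint (opT A B) = opT (adjoint A) (adjoint B) :=
  ext_entry fun w v => by simp only [entry_adjoint, entry_opT, map_mul]

lemma opT_smul_smul (c d : ℂ) (A : TP n m →L[ℂ] TP n m) (B : TP n k →L[ℂ] TP n k) :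
    opT (c • A) (d • B) = (c * d) • opT A B := by
  refine ext_entry fun w v => ?_
  simp only [entry_opT, entry_smul]
  ring

lemma opT_tmul (A : TP n m →L[ℂ] TP n m) (B : TP n k →L[ℂ] TP n k) (x : TP n m) (y : TP n k) :
    opT A B (tmul x y) = tmul (A x) (B y) := by
  ext w
  simp only [tmul, WithLp.equiv_symm_apply, apply_eq_sum_entry, entry_opT, sum_words_add,
    wfst_append, wsnd_append, Finset.sum_mul_sum]
  exact Finset.sum_congr rfl fun _ _ => Finset.sum_congr rfl fun _ _ => by ring

lemma entry_tensR (y : TP n k) (w : Wd n (m + k)) (v : Wd n m) :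
    entry (tensR y) w v = if wfst w = v then y (wsnd w) else 0 :=
  entry_ofMatR _ w v

lemma sum_tensR_conj (B : TP n m →L[ℂ] TP n m) :
    ∑ r : Wd n k, tensR (EuclideanSpace.single r 1) ∘L B ∘L
        adjoint (tensR (m := m) (EuclideanSpace.single r 1)) =
      opT B (ContinuousLinearMap.id ℂ (TP n k)) := by
  refine ext_entry fun w v => ?_
  simp only [entry_sum, entry_comp, entry_adjoint, entry_tensR, entry_opT, entry_id,
    PiLp.single_apply]
  simp [apply_ite (starRingEnd ℂ), mul_ite, ite_mul, Finset.sum_ite_eq', eq_comm]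

lemma tensR_comp (y : TP n k) (A : TP n m →L[ℂ] TP n m) :
    tensR y ∘L A = opT A (ContinuousLinearMap.id ℂ (TP n k)) ∘L tensR y := by
  refine ext_entry fun w v => ?_
  simp [entry_comp, entry_tensR, entry_opT, entry_id, sum_words_add, mul_ite,
    Finset.sum_ite_eq, Finset.sum_ite_eq', mul_comm]

end TensorProducts

section RightCreation

variable {n : ℕ}

lemma wsnd_eq_letter_iff {a : ℕ} (w : Wd n (a + 1)) (j : Fin n) :
    wsnd (m := a) (k := 1) w = letter j ↔ w (Fin.last a) = j :=
  ⟨fun h => congrFun h 0, fun h => funext fun i => by rw [Subsingleton.elim i 0]; exact h⟩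

lemma rcreate_eq_tensR (j : Fin n) (a : ℕ) :
    rcreate j a = tensR (EuclideanSpace.single (letter j) 1) := by
  refine ext_entry fun w v => ?_
  have hfst : (fun i => w i.castSucc) = wfst w := rfl
  simp only [rcreate, entry_ofMatR, entry_tensR, Matrix.of_apply, PiLp.single_apply,
    wsnd_eq_letter_iff, hfst]
  by_cases h : wfst w = v <;> simp [h]

lemma tensR_single_of_length_zero {m : ℕ} (r : Wd n 0) :
    tensR (m := m) (EuclideanSpace.single r 1) = ContinuousLinearMap.id ℂ (TP n m) := by
  refine ext_entry fun w v => ?_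
  have hr : wsnd (m := m) w = r := Subsingleton.elim _ _
  simp only [entry_tensR, hr, PiLp.single_apply, if_true]
  exact (entry_id (wfst w) v).symm

lemma rcreate_comp_tensR_single {m d : ℕ} (j : Fin n) (s : Wd n d) :
    rcreate j (m + d) ∘L tensR (EuclideanSpace.single s 1) =
      tensR (m := m) (EuclideanSpace.single (Fin.snoc s j) 1) := by
  refine ext_entry fun w v => ?_
  have hfst : wfst (m := m) (k := d) (wfst w) = wfst (m := m) (k := d + 1) w := rfl
  have hsnd : wsnd (m := m) (k := d + 1) w = Fin.snoc s j ↔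
      wsnd (m := m) (k := d) (wfst w) = s ∧ w (Fin.last (m + d)) = j := by
    rw [← Fin.snoc_init_self (wsnd (m := m) (k := d + 1) w), Fin.snoc_inj]
    rfl
  simp only [rcreate_eq_tensR, entry_comp, entry_tensR, PiLp.single_apply, wsnd_eq_letter_iff, hsnd,
    ite_mul, zero_mul, Finset.sum_ite_eq, Finset.mem_univ, if_true]
  rw [hfst]
  by_cases h1 : wfst (m := m) (k := d + 1) w = v <;> simp [h1, and_comm, ite_and]

end RightCreation

section DiagonalWeights

variable {n : ℕ} {Q : TP n 1 →L[ℂ] TP n 1}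

lemma letter_apply_zero (w : Wd n 1) : letter (w 0) = w :=
  funext fun i => by rw [Subsingleton.elim i 0]; rfl

lemma apply_of_diag (hdiag : ∀ i j : Fin n, i ≠ j → ent Q (letter i) (letter j) = 0)
    (x : TP n 1) (w : Wd n 1) : Q x w = ent Q w w * x w := by
  rw [apply_eq_sum_entry, Finset.sum_eq_single w]
  · rfl
  · intro v _ hv
    rw [← letter_apply_zero w, ← letter_apply_zero v] at hv ⊢
    rw [show entry Q _ _ = ent Q _ _ from rfl, hdiag _ _ fun h => hv (by rw [h]), zero_mul]
  · simp

lemma ent_letter_pos (hpos : Q.IsPositive) (hinv : IsUnit Q)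
    (hdiag : ∀ i j : Fin n, i ≠ j → ent Q (letter i) (letter j) = 0) (j : Fin n) :
    0 < ent Q (letter j) (letter j) := by
  set e : TP n 1 := EuclideanSpace.single (letter j) 1
  have hQe : Q e = ent Q (letter j) (letter j) • e := by
    ext w
    rw [apply_of_diag hdiag, PiLp.smul_apply, smul_eq_mul]
    by_cases hw : w = letter j <;> simp [e, hw]
  have hnonneg : 0 ≤ ent Q (letter j) (letter j) := by
    simpa [hQe, e, inner_smul_right] using hpos.inner_nonneg_right e
  refine lt_of_le_of_ne hnonneg fun h0 => ?_
  have : Q e = Q 0 := by rw [hQe, ← h0, zero_smul, map_zero]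
  have he : e = 0 := (ContinuousLinearMap.isUnit_iff_bijective.1 hinv).1 this
  simp [e] at he

lemma entry_tpow (a : ℕ) (w v : Wd n a) :
    entry (tpow Q a) w v = ∏ i, ent Q (letter (w i)) (letter (v i)) :=
  entry_ofMatR _ w v

lemma tpow_apply_of_diag (hdiag : ∀ i j : Fin n, i ≠ j → ent Q (letter i) (letter j) = 0)
    {a : ℕ} (x : TP n a) (w : Wd n a) : tpow Q a x w = Qdg Q w * x w := by
  rw [apply_eq_sum_entry, Finset.sum_eq_single w]
  · rw [entry_tpow]; rfl
  · intro v _ hv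
    obtain ⟨i, hi⟩ := Function.ne_iff.1 (Ne.symm hv)
    rw [entry_tpow, Finset.prod_eq_zero (Finset.mem_univ i) (hdiag _ _ hi), zero_mul]
  · simp

lemma Qdg_pos (hq : ∀ j, 0 < ent Q (letter j) (letter j)) {a : ℕ} (w : Wd n a) : 0 < Qdg Q w :=
  Finset.prod_pos fun i _ => hq (w i)

lemma opT_tpow (m k : ℕ) : opT (tpow Q m) (tpow Q k) = tpow Q (m + k) :=
  ext_entry fun w v => by
    rw [entry_opT, entry_tpow, entry_tpow, entry_tpow, Fin.prod_univ_add]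
    rfl

lemma adjoint_tpow (hQ : IsSelfAdjoint Q) (a : ℕ) : adjoint (tpow Q a) = tpow Q a := by
  have hent (u v : Wd n 1) : starRingEnd ℂ (entry Q v u) = entry Q u v := by
    rw [← entry_adjoint, hQ.adjoint_eq]
  refine ext_entry fun w v => ?_
  simp only [entry_adjoint, entry_tpow, map_prod]
  exact Finset.prod_congr rfl fun i _ => hent _ _

end DiagonalWeights

section Projections

variable {n : ℕ} {H : ∀ m, Submodule ℂ (TP n m)}

lemma prj_apply_of_mem {a : ℕ} {x : TP n a} (hx : x ∈ H a) : prj H a x = x :=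
  Submodule.starProjection_eq_self_iff.2 hx

lemma prj_comp_prj (a : ℕ) : prj H a ∘L prj H a = prj H a :=
  (H a).isIdempotentElem_starProjection

lemma adjoint_prj (a : ℕ) : adjoint (prj H a) = prj H a :=
  (isSelfAdjoint_starProjection (H a)).adjoint_eq

lemma orthogonalProjectionOnto_prj {a : ℕ} (x : TP n a) :
    (H a).orthogonalProjectionOnto (prj H a x) = (H a).orthogonalProjectionOnto x :=
  Submodule.orthogonalProjectionOnto_mem_subspace_eq_self _

lemma prj_comp_extOp {a : ℕ} (A : ↥(H a) →L[ℂ] ↥(H a)) : prj H a ∘L extOp H A = extOp H A :=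
  ContinuousLinearMap.ext fun _ => prj_apply_of_mem (A _).2

lemma extOp_comp_prj {a : ℕ} (A : ↥(H a) →L[ℂ] ↥(H a)) : extOp H A ∘L prj H a = extOp H A :=
  ContinuousLinearMap.ext fun x => by
    simp only [extOp, comp_apply, orthogonalProjectionOnto_prj]

lemma extOp_smul {a : ℕ} (c : ℂ) (A : ↥(H a) →L[ℂ] ↥(H a)) :
    extOp H (c • A) = c • extOp H A :=
  ContinuousLinearMap.ext fun _ => by simp [extOp]

lemma cmpOp_prj_comp {a : ℕ} (T : TP n a →L[ℂ] TP n a) : cmpOp H (prj H a ∘L T) = cmpOp H T :=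
  ContinuousLinearMap.ext fun _ => by
    simp only [cmpOp, comp_apply, orthogonalProjectionOnto_prj]

lemma cmpOp_comp_prj {a : ℕ} (T : TP n a →L[ℂ] TP n a) : cmpOp H (T ∘L prj H a) = cmpOp H T :=
  ContinuousLinearMap.ext fun x => by
    simp only [cmpOp, comp_apply, Submodule.subtypeL_apply, prj_apply_of_mem x.2]

lemma cmpOp_prj_conj {a : ℕ} (T : TP n a →L[ℂ] TP n a) :
    cmpOp H (prj H a ∘L T ∘L prj H a) = cmpOp H T := by
  rw [cmpOp_prj_comp, cmpOp_comp_prj]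

lemma cmpOp_smul {a : ℕ} (c : ℂ) (T : TP n a →L[ℂ] TP n a) : cmpOp H (c • T) = c • cmpOp H T :=
  ContinuousLinearMap.ext fun _ => by simp [cmpOp]

lemma cmpOp_extOp_comp {a : ℕ} (G : ↥(H a) →L[ℂ] ↥(H a)) (T : TP n a →L[ℂ] TP n a) :
    cmpOp H (extOp H G ∘L T) = G ∘L cmpOp H T :=
  ContinuousLinearMap.ext fun _ => by
    simp only [cmpOp, extOp, comp_apply, Submodule.subtypeL_apply,
      Submodule.orthogonalProjectionOnto_mem_subspace_eq_self]

lemma cmpOp_comp_of_prj_comp {a : ℕ} {T : TP n a →L[ℂ] TP n a}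
    (hT : prj H a ∘L T ∘L prj H a = prj H a ∘L T) (X : TP n a →L[ℂ] TP n a) :
    cmpOp H (T ∘L X) = cmpOp H T ∘L cmpOp H X := by
  rw [← cmpOp_prj_comp, ← comp_assoc, ← hT]
  exact ContinuousLinearMap.ext fun _ => by
    simp only [cmpOp, comp_apply, orthogonalProjectionOnto_prj]
    rfl

end Projections

section SubproductSystem

variable {n : ℕ} {H : ∀ m, Submodule ℂ (TP n m)}

lemma IsSubproduct.ne_bot_of_add (hsp : IsSubproduct H) {m k : ℕ} (h : H (m + k) ≠ ⊥) :
    H m ≠ ⊥ ∧ H k ≠ ⊥ := by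
  have hbot (hxy : ∀ x ∈ H m, ∀ y ∈ H k, tmul x y = 0) : H (m + k) = ⊥ :=
    eq_bot_iff.2 <| (hsp.2 m k).trans <| Submodule.span_le.2 <| by
      rintro _ ⟨x, hx, y, hy, rfl⟩
      exact (Submodule.mem_bot ℂ).2 (hxy x hx y hy)
  refine ⟨fun hm => h (hbot fun x hx y _ => ?_), fun hk => h (hbot fun x _ y hy => ?_)⟩
  · rw [hm, Submodule.mem_bot] at hx
    ext w; simp [tmul, hx]
  · rw [hk, Submodule.mem_bot] at hy
    ext w; simp [tmul, hy]

lemma opT_comp_prj_of_fix (hsp : IsSubproduct H) {a b : ℕ} {A : TP n a →L[ℂ] TP n a}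
    {B : TP n b →L[ℂ] TP n b} (hA : ∀ x ∈ H a, A x = x) (hB : ∀ y ∈ H b, B y = y) :
    opT A B ∘L prj H (a + b) = prj H (a + b) := by
  have key (z) (hz : z ∈ tensorSub (H a) (H b)) : opT A B z = z := by
    induction hz using Submodule.span_induction with
    | mem z hz =>
      obtain ⟨x, hx, y, hy, rfl⟩ := hz
      rw [opT_tmul, hA x hx, hB y hy]
    | zero => simp
    | add z₁ z₂ _ _ h₁ h₂ => rw [map_add, h₁, h₂]
    | smul c z _ h => rw [map_smul, h]
  exact ContinuousLinearMap.ext fun x =>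
    key _ (hsp.2 a b (Submodule.starProjection_apply_mem _ x))

lemma prj_comp_opT_prj_id (hsp : IsSubproduct H) (a : ℕ) :
    prj H (a + 1) ∘L opT (prj H a) (ContinuousLinearMap.id ℂ (TP n 1)) = prj H (a + 1) := by
  have h := congrArg adjoint (opT_comp_prj_of_fix hsp (B := ContinuousLinearMap.id ℂ (TP n 1))
    (fun x hx => prj_apply_of_mem (a := a) hx) fun _ _ => rfl)
  rwa [adjoint_comp, opT_adjoint, adjoint_prj, adjoint_prj, adjoint_id] at h

lemma prj_comp_rshW (hsp : IsSubproduct H) (m : ℕ) : ∀ (d : ℕ) (r : Wd n d),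
    prj H (m + d) ∘L rshW H m d r =
      prj H (m + d) ∘L tensR (EuclideanSpace.single r 1) ∘L prj H m
  | 0, r => by
    rw [tensR_single_of_length_zero, ContinuousLinearMap.id_comp]
    exact (prj_comp_prj m).symm
  | d + 1, r => by
    calc prj H (m + d + 1) ∘L rshW H m (d + 1) r
        = prj H (m + d + 1) ∘L rcreate (r (Fin.last d)) (m + d) ∘L
            (prj H (m + d) ∘L rshW H m d (Fin.init r)) := by
          simp only [rshW, rsh, ← comp_assoc, prj_comp_prj]
      _ = prj H (m + d + 1) ∘L opT (prj H (m + d)) (ContinuousLinearMap.id ℂ (TP n 1)) ∘L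
            rcreate (r (Fin.last d)) (m + d) ∘L tensR (EuclideanSpace.single (Fin.init r) 1) ∘L
              prj H m := by
          rw [prj_comp_rshW hsp m d, rcreate_eq_tensR, ← comp_assoc (tensR _) (prj H (m + d)),
            tensR_comp]
          simp only [comp_assoc]
      _ = prj H (m + (d + 1)) ∘L tensR (EuclideanSpace.single r 1) ∘L prj H m := by
          rw [← comp_assoc, prj_comp_opT_prj_id hsp, ← comp_assoc (rcreate _ _),
            rcreate_comp_tensR_single, Fin.snoc_init_self]
          rfl

lemma adjoint_rshW_comp_prj (hsp : IsSubproduct H) {m k : ℕ} (r : Wd n k) :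
    adjoint (rshW H m k r) ∘L prj H (m + k) =
      prj H m ∘L adjoint (tensR (m := m) (EuclideanSpace.single r 1)) ∘L prj H (m + k) := by
  have h := congrArg adjoint (prj_comp_rshW hsp m k r)
  simpa only [adjoint_comp, adjoint_prj, comp_assoc] using h

lemma prj_conj_sum_rshW (hsp : IsSubproduct H) {m k : ℕ} (C : TP n m →L[ℂ] TP n m) :
    prj H (m + k) ∘L (∑ r : Wd n k, rshW H m k r ∘L C ∘L adjoint (rshW H m k r)) ∘L
        prj H (m + k) =
      prj H (m + k) ∘L opT (prj H m ∘L C ∘L prj H m) (ContinuousLinearMap.id ℂ (TP n k)) ∘L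
        prj H (m + k) := by
  rw [← sum_tensR_conj]
  simp only [finsetSum_comp, comp_finsetSum]
  refine Finset.sum_congr rfl fun r _ => ?_
  calc prj H (m + k) ∘L (rshW H m k r ∘L C ∘L adjoint (rshW H m k r)) ∘L prj H (m + k)
      = (prj H (m + k) ∘L rshW H m k r) ∘L C ∘L (adjoint (rshW H m k r) ∘L prj H (m + k)) := by
        simp only [comp_assoc]
    _ = _ := by
        rw [prj_comp_rshW hsp, adjoint_rshW_comp_prj hsp]
        simp only [comp_assoc]

lemma cmpOp_sum_rshW_conj (hsp : IsSubproduct H) {m k : ℕ} (A : ↥(H m) →L[ℂ] ↥(H m)) :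
    cmpOp H (∑ r : Wd n k, rshW H m k r ∘L extOp H A ∘L adjoint (rshW H m k r)) =
      cmpOp H (opT (extOp H A) (ContinuousLinearMap.id ℂ (TP n k))) := by
  rw [← cmpOp_prj_conj, prj_conj_sum_rshW hsp, extOp_comp_prj, prj_comp_extOp, cmpOp_prj_conj]

lemma Vml_comp_prj (hsp : IsSubproduct H) (Q : TP n 1 →L[ℂ] TP n 1) (m k : ℕ) :
    Vml H Q m k ∘L prj H (m + k) = lamC H Q m k • prj H (m + k) := by
  have hfix : opT (prj H m) (ContinuousLinearMap.id ℂ (TP n k)) ∘L prj H (m + k) =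
      prj H (m + k) :=
    opT_comp_prj_of_fix hsp (fun x hx => prj_apply_of_mem hx) fun _ _ => rfl
  calc Vml H Q m k ∘L prj H (m + k)
      = lamC H Q m k • ∑ r : Wd n k, prj H (m + k) ∘L tensR (EuclideanSpace.single r 1) ∘L
          (adjoint (rshW H m k r) ∘L prj H (m + k)) := by
        simp only [Vml, smul_comp, finsetSum_comp, comp_assoc]
    _ = lamC H Q m k • (prj H (m + k) ∘L opT (prj H m) (ContinuousLinearMap.id ℂ (TP n k)) ∘L
          prj H (m + k)) := by
        simp only [adjoint_rshW_comp_prj hsp, ← sum_tensR_conj, finsetSum_comp, comp_finsetSum,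
          comp_assoc]
    _ = lamC H Q m k • prj H (m + k) := by rw [hfix, prj_comp_prj]

lemma cmpOp_opT_extOp_prj (hsp : IsSubproduct H) {m k : ℕ} (A : ↥(H m) →L[ℂ] ↥(H m)) :
    cmpOp H (opT (extOp H A) (prj H k)) =
      cmpOp H (opT (extOp H A) (ContinuousLinearMap.id ℂ (TP n k))) := by
  have hfix : opT (ContinuousLinearMap.id ℂ (TP n m)) (prj H k) ∘L prj H (m + k) =
      prj H (m + k) :=
    opT_comp_prj_of_fix hsp (fun _ _ => rfl) fun y hy => prj_apply_of_mem hy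
  calc cmpOp H (opT (extOp H A) (prj H k))
      = cmpOp H (opT (extOp H A) (ContinuousLinearMap.id ℂ (TP n k)) ∘L
          opT (ContinuousLinearMap.id ℂ (TP n m)) (prj H k) ∘L prj H (m + k)) := by
        rw [← comp_assoc, opT_comp, comp_id, id_comp, cmpOp_comp_prj]
    _ = _ := by rw [hfix, cmpOp_comp_prj]

lemma opTG_id_eq_opT {m k : ℕ} (B : TP n m →L[ℂ] TP n m) :
    opTG (Nat.le_add_right m k) B (ContinuousLinearMap.id ℂ (TP n (m + k - m))) =
      opT B (ContinuousLinearMap.id ℂ (TP n k)) := by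
  refine ext_entry fun w v => ?_
  have hdr : dr m w = dr m v ↔ wsnd w = wsnd v :=
    ⟨fun h => funext fun i => congrFun h ⟨i, by omega⟩,
      fun h => funext fun i => congrFun h ⟨i, by omega⟩⟩
  simp only [opTG, opT, entry_ofMatR, Matrix.of_apply]
  change ent B (wfst w) (wfst v) * entry (ContinuousLinearMap.id ℂ _) (dr m w) (dr m v) =
    ent B (wfst w) (wfst v) * entry (ContinuousLinearMap.id ℂ _) (wsnd w) (wsnd v)
  rw [entry_id, entry_id, if_congr hdr rfl rfl]

lemma iota_eq_cmpOp_opT {m k : ℕ} (A : ↥(H m) →L[ℂ] ↥(H m)) :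
    iota H (Nat.le_add_right m k) A =
      cmpOp H (opT (extOp H A) (ContinuousLinearMap.id ℂ (TP n k))) := by
  rw [iota, opTG_id_eq_opT]

end SubproductSystem

section Normalization

variable {n : ℕ} {H : ∀ m, Submodule ℂ (TP n m)} {Q : TP n 1 →L[ℂ] TP n 1}

lemma inner_tpow_pos (hq : ∀ j, 0 < ent Q (letter j) (letter j))
    (hdiag : ∀ i j : Fin n, i ≠ j → ent Q (letter i) (letter j) = 0) {a : ℕ} {x : TP n a}
    (hx : x ≠ 0) : 0 < inner ℂ x (tpow Q a x) :=
  inner_self_pos_of_apply_eq_mul (Qdg_pos hq) (tpow_apply_of_diag hdiag) hx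

lemma trQ_ne_zero (hq : ∀ j, 0 < ent Q (letter j) (letter j))
    (hdiag : ∀ i j : Fin n, i ≠ j → ent Q (letter i) (letter j) = 0) {a : ℕ} (ha : H a ≠ ⊥) :
    trQ H Q a ≠ 0 :=
  (trace_compression_pos (fun _ hx => inner_tpow_pos hq hdiag hx) ha).ne'

lemma isUnit_cmpOp_tpow (hq : ∀ j, 0 < ent Q (letter j) (letter j))
    (hdiag : ∀ i j : Fin n, i ≠ j → ent Q (letter i) (letter j) = 0) (a : ℕ) :
    IsUnit (cmpOp H (tpow Q a)) :=
  isUnit_compression fun _ hx => inner_tpow_pos hq hdiag hx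

lemma lamC_mul_self {m k : ℕ} (hm : trQ H Q m ≠ 0) (hk : trQ H Q k ≠ 0)
    (hl : trQ H Q (m + k) ≠ 0) :
    lamC H Q m k * lamC H Q m k = trQ H Q m * trQ H Q k / trQ H Q (m + k) := by
  rw [lamC, ← Complex.cpow_add _ _ (div_ne_zero (mul_ne_zero hm hk) hl), add_halves,
    Complex.cpow_one]

lemma prj_comp_tpow_comp_prj (hQ : IsSelfAdjoint Q)
    (hpres : ∀ m, prj H m ∘L tpow Q m ∘L prj H m = tpow Q m ∘L prj H m) (a : ℕ) :
    prj H a ∘L tpow Q a ∘L prj H a = prj H a ∘L tpow Q a := by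
  simpa only [adjoint_comp, adjoint_prj, adjoint_tpow hQ, comp_assoc] using
    congrArg adjoint (hpres a)

lemma opT_rhoExt_comp (hpres : ∀ m, prj H m ∘L tpow Q m ∘L prj H m = tpow Q m ∘L prj H m)
    {m k : ℕ} {A : TP n m →L[ℂ] TP n m} {B : TP n k →L[ℂ] TP n k}
    (hA : prj H m ∘L A = A) (hB : prj H k ∘L B = B) :
    opT (rhoExt H Q m) (rhoExt H Q k) ∘L opT A B =
      ((trQ H Q m)⁻¹ * (trQ H Q k)⁻¹) • (tpow Q (m + k) ∘L opT A B) := by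
  rw [rhoExt, rhoExt, hpres, hpres, opT_smul_smul, smul_comp, opT_comp, comp_assoc, comp_assoc,
    hA, hB, ← opT_comp, opT_tpow]

lemma cmpOp_VmlStar_comp_opT_comp_Vml (hsp : IsSubproduct H) (hQ : IsSelfAdjoint Q)
    (hq : ∀ j, 0 < ent Q (letter j) (letter j))
    (hdiag : ∀ i j : Fin n, i ≠ j → ent Q (letter i) (letter j) = 0)
    (hpres : ∀ m, prj H m ∘L tpow Q m ∘L prj H m = tpow Q m ∘L prj H m)
    {m k : ℕ} (A : ↥(H m) →L[ℂ] ↥(H m)) :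
    cmpOp H (VmlStar H Q m k ∘L opT (extOp H A) (prj H k) ∘L Vml H Q m k) =
      cmpOp H (opT (extOp H A) (prj H k)) := by
  by_cases hl : H (m + k) = ⊥
  · have : Subsingleton ↥(H (m + k)) := by rw [hl]; infer_instance
    exact Subsingleton.elim _ _
  obtain ⟨hm, hk⟩ := hsp.ne_bot_of_add hl
  set X := opT (extOp H A) (prj H k)
  set G := Ring.inverse (cmpOp H (tpow Q (m + k)))
  have hVX : VmlStar H Q m k ∘L X = (lamC H Q m k * ((trQ H Q m)⁻¹ * (trQ H Q k)⁻¹) *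
      trQ H Q (m + k)) • (extOp H G ∘L tpow Q (m + k) ∘L X) := by
    rw [VmlStar, smul_comp, comp_assoc, opT_rhoExt_comp hpres (prj_comp_extOp A)
      (prj_comp_prj k), comp_smul, extOp_smul, smul_comp, smul_smul, smul_smul]
  have hGX : cmpOp H (extOp H G ∘L tpow Q (m + k) ∘L X) = cmpOp H X := by
    have hG : G ∘L cmpOp H (tpow Q (m + k)) = ContinuousLinearMap.id ℂ _ :=
      Ring.inverse_mul_cancel _ (isUnit_cmpOp_tpow hq hdiag _)
    rw [cmpOp_extOp_comp, cmpOp_comp_of_prj_comp (prj_comp_tpow_comp_prj hQ hpres _),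
      ← comp_assoc, hG, id_comp]
  have htm := trQ_ne_zero hq hdiag hm
  have htk := trQ_ne_zero hq hdiag hk
  have htl := trQ_ne_zero hq hdiag hl
  have hscalar : lamC H Q m k * (lamC H Q m k * ((trQ H Q m)⁻¹ * (trQ H Q k)⁻¹) *
      trQ H Q (m + k)) = 1 := by
    rw [← mul_assoc, ← mul_assoc, lamC_mul_self htm htk htl]
    field_simp
  calc cmpOp H (VmlStar H Q m k ∘L X ∘L Vml H Q m k)
      = cmpOp H (VmlStar H Q m k ∘L X ∘L (Vml H Q m k ∘L prj H (m + k))) := by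
        rw [← cmpOp_comp_prj]; simp only [comp_assoc]
    _ = lamC H Q m k • cmpOp H (VmlStar H Q m k ∘L X) := by
        rw [Vml_comp_prj hsp, comp_smul, comp_smul, cmpOp_smul, ← comp_assoc, cmpOp_comp_prj]
    _ = cmpOp H X := by
        rw [hVX, cmpOp_smul, hGX, smul_smul, hscalar, one_smul]

end Normalization

/-- **Statement 10.** `V_{m,l}^* (A ⊗ 1_{H_{l−m}}) V_{m,l} = Σ_{|r|=l−m} R_r A R_r^* |_{H_l}
= ι_{m,l}(A)` (with `l = m + k`). -/
theorem stmt10 {n : ℕ} (H : ∀ m, Submodule ℂ (TP n m)) (hsp : IsSubproduct H)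
    (Q : TP n 1 →L[ℂ] TP n 1) (hpos : Q.IsPositive) (hinv : IsUnit Q)
    (hdiag : ∀ i j : Fin n, i ≠ j → ent Q (letter i) (letter j) = 0)
    (hpres : ∀ m, prj H m ∘L tpow Q m ∘L prj H m = tpow Q m ∘L prj H m)
    (m k : ℕ) (A : ↥(H m) →L[ℂ] ↥(H m)) :
    cmpOp H (VmlStar H Q m k ∘L opT (extOp H A) (prj H k) ∘L Vml H Q m k) =
      cmpOp H (∑ r : Wd n k,
        rshW H m k r ∘L extOp H A ∘L ContinuousLinearMap.adjoint (rshW H m k r)) ∧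
    cmpOp H (∑ r : Wd n k,
        rshW H m k r ∘L extOp H A ∘L ContinuousLinearMap.adjoint (rshW H m k r)) =
      iota H (Nat.le_add_right m k) A := by
  have hq := ent_letter_pos hpos hinv hdiag
  have hR := cmpOp_sum_rshW_conj hsp (k := k) A
  refine ⟨?_, hR.trans (iota_eq_cmpOp_opT A).symm⟩
  rw [hR, cmpOp_VmlStar_comp_opT_comp_Vml hsp hpos.isSelfAdjoint hq hdiag hpres A,
    cmpOp_opT_extOp_prj hsp A]
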